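/- Let M be a root-closed inside factorial monoid with base Q. Then M = Ap(M,Q) ⊕ ⟨Q⟩: every x ∈ M can be written as x = Σ_{q∈Q} λ_q q + z with λ_q ∈ ℕ and z ∈ Ap(M,Q), and the λ_q and z are uniquely determined. -/

import Mathlib

/-!
Existence: if `m • x = Σ g_q q` in `⟨Q⟩`, then every `Σ f_q q` dividing `x` has `Σ f_q ≤ Σ g_q`
(push a multiple of the cofactor into `⟨Q⟩` and compare in the free monoid), so splitting
elements of `Q` off `x` must stop, and it stops at an element of `Ap(M,Q)`.

Uniqueness: if `Σ f_q q + z = Σ f'_q q + z'` with `z' ∈ Ap(M,Q)` and `f'_q < f_q`, choose `N > 0`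
with `N • z, N • z' ∈ ⟨Q⟩`; freeness forces the `q`-coefficient of `N • z'` to be at least `N`,
so `N • q ∣ N • z'`, and root-closedness gives `q ∣ z'`, a contradiction.
-/

/-- `x ≤_M y` : divisibility in the additive monoid `M`. -/
def MDvd {M : Type*} [AddCancelCommMonoid M] (x y : M) : Prop := ∃ z : M, y = x + z

/-- The Apéry set `Ap(M,Q) = M \ (Q + M)`. -/
def AperyM {M : Type*} [AddCancelCommMonoid M] (Q : Set M) : Set M :=
  {x | ∀ q ∈ Q, ¬ MDvd q x}

/-- The sum `Σ_{q ∈ Q} λ_q q` encoded by a finitely supported function. -/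
def fsum {M : Type*} [AddCancelCommMonoid M] (f : M →₀ ℕ) : M :=
  f.sum fun q n => n • q

/-- `⟨Q⟩` is factorial, freely generated by `Q`. -/
def FreeOn {M : Type*} [AddCancelCommMonoid M] (Q : Set M) : Prop :=
  ∀ f g : M →₀ ℕ, (f.support : Set M) ⊆ Q → (g.support : Set M) ⊆ Q →
    fsum f = fsum g → f = g

/-- `M` is inside factorial with base `Q`. -/
def InsideFactorial {M : Type*} [AddCancelCommMonoid M] (Q : Set M) : Prop :=
  FreeOn Q ∧ ∀ x : M, x ≠ 0 → ∃ m : ℕ, 0 < m ∧ m • x ∈ AddSubmonoid.closure Q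

/-- `M` is root-closed: `n • a ≤_M n • b` for a positive `n` implies `a ≤_M b`. -/
def RootClosedM (M : Type*) [AddCancelCommMonoid M] : Prop :=
  ∀ (n : ℕ) (a b : M), 0 < n → MDvd (n • a) (n • b) → MDvd a b

open Finsupp

section FreeSubmonoid

variable {M : Type*} [AddCancelCommMonoid M] {Q : Set M}

lemma fsum_eq_linearCombination (f : M →₀ ℕ) : fsum f = linearCombination ℕ id f := rfl

lemma fsum_add (f g : M →₀ ℕ) : fsum (f + g) = fsum f + fsum g :=
  map_add (linearCombination ℕ id) f g

lemma fsum_nsmul (k : ℕ) (f : M →₀ ℕ) : fsum (k • f) = k • fsum f :=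
  map_nsmul (linearCombination ℕ id) k f

lemma fsum_single (q : M) (n : ℕ) : fsum (single q n) = n • q := by
  simp [fsum_eq_linearCombination]

lemma mdvd_fsum_of_le {f g : M →₀ ℕ} (h : f ≤ g) : MDvd (fsum f) (fsum g) :=
  ⟨fsum (g - f), by rw [← fsum_add, add_tsub_cancel_of_le h]⟩

lemma exists_mem_supported_fsum_eq {y : M} (hy : y ∈ AddSubmonoid.closure Q) :
    ∃ f ∈ supported ℕ ℕ Q, fsum f = y := by
  rw [← Submodule.span_nat_eq_addSubmonoidClosure, ← Set.image_id Q] at hy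
  exact (mem_span_image_iff_linearCombination ℕ).1 hy

lemma FreeOn.eq_of_fsum_eq (hQ : FreeOn Q) {f g : M →₀ ℕ} (hf : f ∈ supported ℕ ℕ Q)
    (hg : g ∈ supported ℕ ℕ Q) (h : fsum f = fsum g) : f = g :=
  hQ f g ((mem_supported ℕ f).1 hf) ((mem_supported ℕ g).1 hg) h

lemma InsideFactorial.exists_nsmul_eq_fsum (hQ : InsideFactorial Q) (x : M) :
    ∃ n, 0 < n ∧ ∃ f ∈ supported ℕ ℕ Q, n • x = fsum f := by
  by_cases hx : x = 0
  · exact ⟨1, one_pos, 0, zero_mem _, by simp [hx, fsum_eq_linearCombination]⟩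
  obtain ⟨n, hn, hmem⟩ := hQ.2 x hx
  obtain ⟨f, hf, hfx⟩ := exists_mem_supported_fsum_eq hmem
  exact ⟨n, hn, f, hf, hfx.symm⟩

lemma InsideFactorial.degree_le_of_mdvd (hQ : InsideFactorial Q) {x : M} {m : ℕ}
    {f g : M →₀ ℕ} (hm : 0 < m) (hf : f ∈ supported ℕ ℕ Q) (hg : g ∈ supported ℕ ℕ Q)
    (hx : m • x = fsum g) (hfx : MDvd (fsum f) x) : degree f ≤ degree g := by
  obtain ⟨y, rfl⟩ := hfx
  obtain ⟨k, hk, h, hh, hy⟩ := hQ.exists_nsmul_eq_fsum y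
  have hkg : k • g = (k * m) • f + m • h := by
    refine hQ.1.eq_of_fsum_eq (Submodule.smul_mem _ k hg)
      (add_mem (Submodule.smul_mem _ _ hf) (Submodule.smul_mem _ m hh)) ?_
    rw [fsum_add, fsum_nsmul, fsum_nsmul, fsum_nsmul, ← hx, ← hy, smul_add, smul_add, mul_smul,
      smul_comm k m y]
  have hdeg := congrArg degree hkg
  simp only [map_add, map_nsmul, smul_eq_mul] at hdeg
  refine Nat.le_of_mul_le_mul_left ?_ hk
  calc k * degree f ≤ k * m * degree f := Nat.mul_le_mul_right _ (Nat.le_mul_of_pos_right k hm)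
    _ ≤ k * degree g := by omega

lemma exists_fsum_add_mem_aperyM_of_degree_le (n : ℕ) {x : M}
    (hn : ∀ f ∈ supported ℕ ℕ Q, MDvd (fsum f) x → degree f ≤ n) :
    ∃ f ∈ supported ℕ ℕ Q, ∃ z ∈ AperyM Q, x = fsum f + z := by
  induction n generalizing x with
  | zero =>
    refine ⟨0, zero_mem _, x, fun q hq hqx => ?_, by simp [fsum_eq_linearCombination]⟩
    have := hn (single q 1) (single_mem_supported ℕ 1 hq) (by rwa [fsum_single, one_nsmul])
    simp at this
  | succ n ih =>
    by_cases hx : x ∈ AperyM Q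
    · exact ⟨0, zero_mem _, x, hx, by simp [fsum_eq_linearCombination]⟩
    simp only [AperyM, Set.mem_ofPred_eq, not_forall, not_not] at hx
    obtain ⟨q, hq, x', rfl⟩ := hx
    have hq1 : single q 1 ∈ supported ℕ ℕ Q := single_mem_supported ℕ 1 hq
    obtain ⟨f, hf, z, hz, rfl⟩ := ih (x := x') fun f hf hfx => by
      obtain ⟨y, hy⟩ := hfx
      have := hn (f + single q 1) (add_mem hf hq1)
        ⟨y, by rw [hy, fsum_add, fsum_single, one_nsmul]; abel⟩
      simpa using this
    exact ⟨f + single q 1, add_mem hf hq1, z, hz, by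
      rw [fsum_add, fsum_single, one_nsmul]; abel⟩

lemma le_of_fsum_add_eq_fsum_add (hQ : InsideFactorial Q) (hrc : RootClosedM M)
    {f f' : M →₀ ℕ} {z z' : M} (hf : f ∈ supported ℕ ℕ Q) (hf' : f' ∈ supported ℕ ℕ Q)
    (hz' : z' ∈ AperyM Q) (h : fsum f + z = fsum f' + z') : f ≤ f' := by
  intro q
  by_contra! hlt
  have hq : q ∈ Q := (mem_supported ℕ f).1 hf (mem_support_iff.2 (by omega))
  obtain ⟨n, hn, C, hC, hz⟩ := hQ.exists_nsmul_eq_fsum z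
  obtain ⟨n', hn', C', hC', hz'C'⟩ := hQ.exists_nsmul_eq_fsum z'
  have key : (n * n') • f + n' • C = (n * n') • f' + n • C' := by
    refine hQ.1.eq_of_fsum_eq (add_mem (Submodule.smul_mem _ _ hf) (Submodule.smul_mem _ _ hC))
      (add_mem (Submodule.smul_mem _ _ hf') (Submodule.smul_mem _ _ hC')) ?_
    rw [fsum_add, fsum_add, fsum_nsmul, fsum_nsmul, fsum_nsmul, fsum_nsmul, ← hz, ← hz'C',
      ← mul_smul, ← mul_smul, mul_comm n' n, ← smul_add, ← smul_add, h]
  have hcoeff := DFunLike.congr_fun key q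
  simp only [Finsupp.add_apply, Finsupp.smul_apply, smul_eq_mul] at hcoeff
  have hle : single q (n * n') ≤ n • C' := by
    have : n * n' * (f' q + 1) ≤ n * n' * f q := Nat.mul_le_mul_left _ hlt
    rw [single_le_iff, Finsupp.smul_apply, smul_eq_mul]
    linarith [Nat.zero_le (n' * C q)]
  have hdvd : MDvd ((n * n') • q) ((n * n') • z') := by
    simpa only [fsum_single, fsum_nsmul, ← hz'C', ← mul_smul, mul_comm n n'] using
      mdvd_fsum_of_le hle
  exact hz' q hq (hrc _ q z' (Nat.mul_pos hn hn') hdvd)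

end FreeSubmonoid

theorem apery_direct_sum_of_rootClosed_general {M : Type*} [AddCancelCommMonoid M]
    (hrc : RootClosedM M) (Q : Set M) (hIF : InsideFactorial Q) :
    ∀ x : M, ∃! p : (M →₀ ℕ) × M,
      (p.1.support : Set M) ⊆ Q ∧ p.2 ∈ AperyM Q ∧ x = fsum p.1 + p.2 := by
  intro x
  obtain ⟨m, hm, g, hg, hx⟩ := hIF.exists_nsmul_eq_fsum x
  obtain ⟨f, hf, z, hz, rfl⟩ := exists_fsum_add_mem_aperyM_of_degree_le (degree g)
    fun f hf hfx => hIF.degree_le_of_mdvd hm hf hg hx hfx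
  refine ⟨(f, z), ⟨(mem_supported ℕ f).1 hf, hz, rfl⟩, ?_⟩
  rintro ⟨f', z'⟩ ⟨hf', hz', h⟩
  rw [← mem_supported ℕ] at hf'
  obtain rfl : f' = f := le_antisymm (le_of_fsum_add_eq_fsum_add hIF hrc hf' hf hz h.symm)
    (le_of_fsum_add_eq_fsum_add hIF hrc hf hf' hz' h)
  rw [add_left_cancel h]

/-- if `M` is root-closed inside factorial with base `Q`, then
`M = Ap(M,Q) ⊕ ⟨Q⟩`: every `x ∈ M` is uniquely `Σ λ_q q + z` with `z ∈ Ap(M,Q)`. -/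
theorem apery_direct_sum_of_rootClosed {M : Type*} [AddCancelCommMonoid M]
    (hred : ∀ a b : M, a + b = 0 → a = 0)
    (hrc : RootClosedM M) (Q : Set M) (hIF : InsideFactorial Q) :
    ∀ x : M, ∃! p : (M →₀ ℕ) × M,
      (p.1.support : Set M) ⊆ Q ∧ p.2 ∈ AperyM Q ∧ x = fsum p.1 + p.2 :=
  apery_direct_sum_of_rootClosed_general hrc Q hIF
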